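/- Let Γ be a non-bipartite geometric distance-regular graph with diameter D ≥ 4 and vertex set V, let (u_i)_{i=0}^D be the standard sequence of the smallest eigenvalue θ_min = −k/(a_1+1), and let φ : V → ℝ^N satisfy ⟨φ(x), φ(y)⟩ = u_{d(x,y)} for all vertices x, y. Suppose there exists j with 3 ≤ j ≤ D−1 such that a_i = c_i · a_1 for all 1 ≤ i ≤ j−1 (equivalently, γ_{j−1} = 1) and such that for all vertices x, y with d(x,y) = j the vectors F_j = φ(x) − φ(y) and C_j = Σ_{z ∈ Γ(x)∩Γ_{j−1}(y)} φ(z) − Σ_{w ∈ Γ_{j−1}(x)∩Γ(y)} φ(w) satisfy ⟨C_j, C_j⟩⟨F_j, F_j⟩ = ⟨C_j, F_j⟩². Then a_i = c_i · a_1 for all 1 ≤ i ≤ D, i.e., Γ is a regular near 2D-gon. -/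

import Mathlib

/-!
Put `σ = θ_min / k = -1 / (a₁ + 1)`. Along the three-term recurrence, with `b_i ≠ 0`, the
standard sequence satisfies `u_i = σ^i` exactly as long as `a_i = c_i a₁`, so `u_i = σ^i` for
`i ≤ j`. Equality in Cauchy–Schwarz means `C_j = t F_j`; pairing this with `φ v` for `v` on a
geodesic from `x` through `y` expresses `u_{j+e}` in terms of smaller indices, and propagates
`u_i = σ^i` up to `i = D`. As `Σ_{z ∼ y} φ z = θ φ y`, the recurrence holds for all
`1 ≤ i ≤ D`, and with `u_i = σ^i` it reads `a_i = c_i a₁`. The case `a₁ = 0` is excluded: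
then `φ` changes sign along every edge, so `Γ` would be bipartite.
-/

open Finset

/-- The intersection number `a_i := k - b_i - c_i`, where `k = b 0` is the valency. -/
def drgA (b c : ℕ → ℕ) (i : ℕ) : ℕ := b 0 - b i - c i

/-- `G` is a distance-regular graph with diameter `D` and intersection numbers
`b i`, `c i` (`0 ≤ i ≤ D`, with `b D = 0`, `c 0 = 0`): `G` is connected of diameter `D`,
and for any vertices `x, y` at distance `i`, `y` has exactly `c i` neighbours at distance
`i - 1` from `x` and exactly `b i` neighbours at distance `i + 1` from `x`. -/
def IsDRG {V : Type*} [Fintype V] (G : SimpleGraph V) [DecidableRel G.Adj]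
    (D : ℕ) (b c : ℕ → ℕ) : Prop :=
  G.Connected ∧
  (∀ x y : V, G.dist x y ≤ D) ∧
  (∃ x y : V, G.dist x y = D) ∧
  b D = 0 ∧ c 0 = 0 ∧
  ∀ i, i ≤ D → ∀ x y : V, G.dist x y = i →
    (Finset.univ.filter (fun z => G.Adj y z ∧ G.dist x z = i - 1)).card = c i ∧
    (Finset.univ.filter (fun z => G.Adj y z ∧ G.dist x z = i + 1)).card = b i

/-- `θ` is an eigenvalue of the adjacency matrix of `G`. -/
def IsAdjEigenvalue {V : Type*} [Fintype V] (G : SimpleGraph V) [DecidableRel G.Adj]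
    (θ : ℝ) : Prop :=
  ∃ v : V → ℝ, v ≠ 0 ∧ (G.adjMatrix ℝ).mulVec v = θ • v

/-- `θ` is the smallest eigenvalue of the adjacency matrix of `G`. -/
def IsSmallestAdjEigenvalue {V : Type*} [Fintype V] (G : SimpleGraph V) [DecidableRel G.Adj]
    (θ : ℝ) : Prop :=
  IsAdjEigenvalue G θ ∧ ∀ μ : ℝ, IsAdjEigenvalue G μ → θ ≤ μ

/-- The multiplicity of `θ` as an eigenvalue of the adjacency matrix of `G`,
i.e. the dimension of the `θ`-eigenspace. -/
noncomputable def adjMult {V : Type*} [Fintype V] (G : SimpleGraph V) [DecidableRel G.Adj]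
    (θ : ℝ) : ℕ :=
  Module.finrank ℝ (Module.End.eigenspace ((G.adjMatrix ℝ).mulVecLin) θ)

/-- `u` is the standard sequence of the eigenvalue `θ`:
`u 0 = 1`, `u 1 = θ / k`, and `c i * u (i-1) + a i * u i + b i * u (i+1) = θ * u i`
for `1 ≤ i ≤ D - 1`. -/
def IsStdSeq (D : ℕ) (b c : ℕ → ℕ) (θ : ℝ) (u : ℕ → ℝ) : Prop :=
  u 0 = 1 ∧ u 1 = θ / (b 0 : ℝ) ∧
  ∀ i, 1 ≤ i → i ≤ D - 1 →
    (c i : ℝ) * u (i - 1) + (drgA b c i : ℝ) * u i + (b i : ℝ) * u (i + 1) = θ * u i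

/-- A Delsarte clique: a clique of size `1 - k / θmin`. -/
def IsDelsarteClique {V : Type*} (G : SimpleGraph V) (k : ℕ) (θmin : ℝ)
    (C : Finset V) : Prop :=
  G.IsClique (C : Set V) ∧ (C.card : ℝ) = 1 - (k : ℝ) / θmin

/-- `G` is geometric with respect to the collection `𝒞` of Delsarte cliques:
every member of `𝒞` is a Delsarte clique and every edge lies in exactly one member of `𝒞`. -/
def IsGeometricWith {V : Type*} (G : SimpleGraph V) (k : ℕ) (θmin : ℝ)
    (𝒞 : Set (Finset V)) : Prop :=
  (∀ C ∈ 𝒞, IsDelsarteClique G k θmin C) ∧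
  ∀ x y : V, G.Adj x y → ∃! C : Finset V, C ∈ 𝒞 ∧ x ∈ C ∧ y ∈ C

/-- The distance `d(x, C) = min { d(x,c) : c ∈ C }` from a vertex to a set of vertices. -/
noncomputable def distToSet {V : Type*} (G : SimpleGraph V) (x : V) (C : Finset V) : ℕ :=
  sInf ((fun c => G.dist x c) '' (C : Set V))

/-- `C` is a completely regular code: the number of neighbours in
`C_j = {y : d(y,C) = j}` of a vertex `x` with `d(x,C) = i` depends only on `i` and `j`,
i.e. the distance partition of `C` is equitable. -/
def IsCompletelyRegularCode {V : Type*} [Fintype V] (G : SimpleGraph V) [DecidableRel G.Adj]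
    (C : Finset V) : Prop :=
  ∀ i j : ℕ, ∃ f : ℕ, ∀ x : V, distToSet G x C = i →
    (Finset.univ.filter (fun y => G.Adj x y ∧ distToSet G y C = j)).card = f

/-- `G` is non-bipartite (contains an odd cycle), i.e. not 2-colorable. -/
def NonBipartite {V : Type*} (G : SimpleGraph V) : Prop := ¬ G.Colorable 2

/-- A set `S` of vertices is strongly closed: any vertex `z` with
`d(x,z) + d(z,y) ≤ d(x,y) + 1` for some `x, y ∈ S` belongs to `S`. -/
def IsStronglyClosed {V : Type*} (G : SimpleGraph V) (S : Set V) : Prop :=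
  ∀ x ∈ S, ∀ y ∈ S, ∀ z : V, G.dist x z + G.dist z y ≤ G.dist x y + 1 → z ∈ S

/-- `G` is `m`-bounded: for every `1 ≤ i ≤ m` and all vertices `x, y` at distance `i`
there is a strongly closed set containing `x` and `y` inducing a connected subgraph
of diameter `i`. -/
def IsMBounded {V : Type*} [Fintype V] (G : SimpleGraph V) (m : ℕ) : Prop :=
  ∀ i, 1 ≤ i → i ≤ m → ∀ x y : V, G.dist x y = i →
    ∃ S : Set V, IsStronglyClosed G S ∧ x ∈ S ∧ y ∈ S ∧
      (G.induce S).Connected ∧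
      (∀ u v : S, (G.induce S).dist u v ≤ i) ∧ (∃ u v : S, (G.induce S).dist u v = i)

/-- The vector `C_j = Σ_{z ∈ Γ(x) ∩ Γ_{j-1}(y)} φ z - Σ_{w ∈ Γ_{j-1}(x) ∩ Γ(y)} φ w`. -/
noncomputable def Cvec {V : Type*} [Fintype V] (G : SimpleGraph V) [DecidableRel G.Adj]
    {N : ℕ} (φ : V → EuclideanSpace ℝ (Fin N)) (j : ℕ) (x y : V) :
    EuclideanSpace ℝ (Fin N) :=
  (∑ z ∈ Finset.univ.filter (fun z => G.Adj x z ∧ G.dist y z = j - 1), φ z)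
    - ∑ w ∈ Finset.univ.filter (fun w => G.dist x w = j - 1 ∧ G.Adj y w), φ w

open scoped InnerProductSpace

section Algebra

theorem pow_recurrence_iff {α σ k a b c : ℝ} (hα : 0 ≤ α) (hσ : (α + 1) * σ = -1)
    (hk : c + a + b = k) (n : ℕ) :
    c * σ ^ n + a * σ ^ (n + 1) + b * σ ^ (n + 2) = k * σ * σ ^ (n + 1) ↔ a = c * α := by
  have hσ0 : σ ≠ 0 := by rintro rfl; simp at hσ
  have hσ1 : 1 - σ ≠ 0 := by nlinarith
  have key : (α + 1) * (c * σ ^ n + a * σ ^ (n + 1) + b * σ ^ (n + 2) - k * σ * σ ^ (n + 1)) =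
      σ ^ n * (1 - σ) * (c * α - a) := by
    rw [← hk]
    linear_combination σ ^ n * (1 - σ) * (c + a) * hσ
  rw [← sub_eq_zero, ← mul_right_inj' (by positivity : α + 1 ≠ 0), mul_zero, key]
  simp [hσ0, hσ1, sub_eq_zero, eq_comm]

theorem eq_pow_add_of_mul_sub_eq {σ w : ℝ} {j e : ℕ} (hj : 1 ≤ j) (hσ : σ - σ ^ (j - 1) ≠ 0)
    (h : (1 - σ ^ j) * (σ ^ (j + e - 1) - σ ^ (e + 1)) = (σ - σ ^ (j - 1)) * (w - σ ^ e)) :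
    w = σ ^ (j + e) := by
  obtain ⟨k, rfl⟩ : ∃ k, j = k + 1 := ⟨j - 1, by omega⟩
  rw [Nat.add_sub_cancel] at h hσ
  rw [show k + 1 + e - 1 = k + e by omega] at h
  apply mul_left_cancel₀ hσ
  linear_combination -h

theorem abs_lt_one_of_mul_eq_neg_one {α σ : ℝ} (hα : 1 ≤ α) (hσ : (α + 1) * σ = -1) :
    |σ| < 1 :=
  abs_lt.2 ⟨by nlinarith, by nlinarith⟩

theorem pow_ne_one_of_abs_lt_one {σ : ℝ} (hσ : |σ| < 1) {n : ℕ} (hn : n ≠ 0) : σ ^ n ≠ 1 := by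
  intro h
  have := pow_lt_one₀ (abs_nonneg σ) hσ hn
  rw [← abs_pow, h, abs_one] at this
  exact lt_irrefl _ this

theorem sub_pow_ne_zero_of_abs_lt_one {σ : ℝ} (hσ : |σ| < 1) (hσ0 : σ ≠ 0) {n : ℕ}
    (hn : 2 ≤ n) : σ - σ ^ n ≠ 0 := by
  obtain ⟨k, rfl⟩ : ∃ k, n = k + 1 := ⟨n - 1, by omega⟩
  rw [pow_succ', ← mul_one_sub]
  exact mul_ne_zero hσ0 (sub_ne_zero.2 (pow_ne_one_of_abs_lt_one hσ (by omega)).symm)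

end Algebra

section InnerProduct

variable {E : Type*} [NormedAddCommGroup E] [InnerProductSpace ℝ E]

theorem eq_smul_of_inner_self_eq_mul_inner {a b : E} {t : ℝ} (h₁ : ⟪a, a⟫_ℝ = t * ⟪a, b⟫_ℝ)
    (h₂ : ⟪a, b⟫_ℝ = t * ⟪b, b⟫_ℝ) : a = t • b := by
  rw [← sub_eq_zero, ← inner_self_eq_zero (𝕜 := ℝ)]
  simp only [inner_sub_left, inner_sub_right, real_inner_smul_left, real_inner_smul_right,
    real_inner_comm a b]
  linear_combination h₁ - t * h₂

theorem eq_smul_of_inner_mul_inner_self_eq_sq {a b : E} (hb : ⟪b, b⟫_ℝ ≠ 0)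
    (h : ⟪a, a⟫_ℝ * ⟪b, b⟫_ℝ = ⟪a, b⟫_ℝ ^ 2) : a = (⟪a, b⟫_ℝ / ⟪b, b⟫_ℝ) • b :=
  eq_smul_of_inner_self_eq_mul_inner (by field_simp; linear_combination h) (by field_simp)

theorem inner_sum_eq_card_mul {V : Type*} {G : SimpleGraph V} {φ : V → E} {u : ℕ → ℝ}
    (hφ : ∀ x y, ⟪φ x, φ y⟫_ℝ = u (G.dist x y)) {S : Finset V} {v : V} {e : ℕ}
    (hS : ∀ z ∈ S, G.dist z v = e) : ⟪∑ z ∈ S, φ z, φ v⟫_ℝ = #S * u e := by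
  rw [sum_inner, sum_congr rfl fun z hz => by rw [hφ, hS z hz], sum_const, nsmul_eq_mul]

end InnerProduct

namespace SimpleGraph

variable {V : Type*} {G : SimpleGraph V}

theorem Connected.exists_adj_dist_eq_of_dist_eq_succ (hG : G.Connected) {x y : V} {d : ℕ}
    (h : G.dist x y = d + 1) : ∃ w, G.Adj y w ∧ G.dist x w = d := by
  obtain ⟨p, hp⟩ := hG.exists_walk_length_eq_dist y x
  rw [SimpleGraph.dist_comm, h] at hp
  have hnil : ¬p.Nil := by simp [← Walk.length_eq_zero_iff, hp]
  refine ⟨p.snd, p.adj_snd hnil, ?_⟩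
  have hle : G.dist p.snd x ≤ d := by
    simpa [Walk.length_tail, hp] using dist_le p.tail
  have htri : G.dist y x ≤ G.dist y p.snd + G.dist p.snd x := hG.dist_triangle
  rw [dist_eq_one_iff_adj.2 (p.adj_snd hnil), SimpleGraph.dist_comm, h] at htri
  rw [SimpleGraph.dist_comm]
  omega

theorem Connected.exists_dist_eq_of_le (hG : G.Connected) {x y : V} {i : ℕ}
    (hi : i ≤ G.dist x y) : ∃ w, G.dist x w = i := by
  induction hn : G.dist x y generalizing y with
  | zero => exact ⟨x, by simp; omega⟩
  | succ n ih =>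
    rcases (hn ▸ hi).eq_or_lt with rfl | hlt
    · exact ⟨y, hn⟩
    · obtain ⟨w, -, hw⟩ := hG.exists_adj_dist_eq_of_dist_eq_succ hn
      exact ih (hw ▸ by omega) hw

theorem Connected.colorable_two_of_forall_adj_eq_neg {M : Type*} [AddCommGroup M] [Module ℝ M]
    (hG : G.Connected) (φ : V → M) (hφ : ∀ v, φ v ≠ 0)
    (hadj : ∀ v w, G.Adj v w → φ w = -φ v) : G.Colorable 2 := by
  classical
  obtain ⟨x₀⟩ := hG.nonempty
  have hsign : ∀ v, φ v = φ x₀ ∨ φ v = -φ x₀ := by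
    intro v
    induction (hG.preconnected v x₀).some with
    | nil => exact Or.inl rfl
    | cons h _ ih => rcases ih with ih | ih <;> simp [hadj _ _ h.symm, ih]
  have hne : ∀ {v w}, G.Adj v w → φ w = φ v → False := fun {v w} h he =>
    hφ v <| (smul_eq_zero.1 (two_smul ℝ (φ v) ▸ eq_neg_iff_add_eq_zero.1
      (he.symm.trans (hadj v w h)))).resolve_left two_ne_zero
  refine (Coloring.mk (fun v => decide (φ v = φ x₀)) fun {v w} h hc => ?_).colorable
  rcases hsign v with hv | hv <;> rcases hsign w with hw | hw
  · exact hne h (hw.trans hv.symm)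
  · simp_all
  · simp_all
  · exact hne h (hw.trans hv.symm)

theorem Connected.colorable_two_of_inner_eq_neg_one {E : Type*} [NormedAddCommGroup E]
    [InnerProductSpace ℝ E] (hG : G.Connected) {φ : V → E} {u : ℕ → ℝ}
    (hφ : ∀ x y, ⟪φ x, φ y⟫_ℝ = u (G.dist x y)) (hu0 : u 0 = 1) (hu1 : u 1 = -1) :
    G.Colorable 2 := by
  refine hG.colorable_two_of_forall_adj_eq_neg φ (fun v hv => ?_) fun v w hvw => ?_
  · simpa [hv, hu0] using hφ v v
  · have hwv : G.dist w v = 1 := dist_eq_one_iff_adj.2 hvw.symm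
    rw [← neg_one_smul ℝ (φ v)]
    apply eq_smul_of_inner_self_eq_mul_inner <;>
      simp only [hφ, hwv, dist_self, hu0, hu1] <;> norm_num

end SimpleGraph

theorem Cvec_swap {V : Type*} [Fintype V] (G : SimpleGraph V) [DecidableRel G.Adj] {N : ℕ}
    (φ : V → EuclideanSpace ℝ (Fin N)) (j : ℕ) (x y : V) :
    Cvec G φ j y x = -Cvec G φ j x y := by
  simp only [Cvec, neg_sub, and_comm]

namespace IsDRG

variable {V : Type*} [Fintype V] {G : SimpleGraph V} [DecidableRel G.Adj] {D : ℕ} {b c : ℕ → ℕ}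
  {u : ℕ → ℝ} {σ : ℝ}

theorem exists_dist_eq (hG : IsDRG G D b c) {i : ℕ} (hi : i ≤ D) : ∃ x y, G.dist x y = i := by
  obtain ⟨x, y, hxy⟩ := hG.2.2.1
  exact ⟨x, hG.1.exists_dist_eq_of_le (hxy ▸ hi)⟩

theorem degree_eq (hG : IsDRG G D b c) (y : V) : G.degree y = b 0 := by
  rw [← SimpleGraph.card_neighborFinset_eq_degree, SimpleGraph.neighborFinset_eq_filter,
    ← (hG.2.2.2.2.2 0 (Nat.zero_le D) y y SimpleGraph.dist_self).2]
  congr 1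
  ext z
  simp

theorem b_pos (hG : IsDRG G D b c) {i : ℕ} (hi : i < D) : 0 < b i := by
  obtain ⟨x, y, hxy⟩ := hG.exists_dist_eq hi
  obtain ⟨w, hyw, hxw⟩ := hG.1.exists_adj_dist_eq_of_dist_eq_succ hxy
  rw [← (hG.2.2.2.2.2 i hi.le x w hxw).2]
  exact card_pos.2 ⟨y, by simp [hyw.symm, hxy]⟩

theorem c_pos (hG : IsDRG G D b c) {i : ℕ} (hi : 1 ≤ i) (hiD : i ≤ D) : 0 < c i := by
  obtain ⟨x, y, hxy⟩ := hG.exists_dist_eq hiD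
  obtain ⟨w, hyw, hxw⟩ :=
    hG.1.exists_adj_dist_eq_of_dist_eq_succ (show G.dist x y = i - 1 + 1 by omega)
  rw [← (hG.2.2.2.2.2 i hiD x y hxy).1]
  exact card_pos.2 ⟨w, by simp [hyw, hxw]⟩

theorem exists_dist_eq_add (hG : IsDRG G D b c) {x y : V} {j : ℕ} (hxy : G.dist x y = j) :
    ∀ {e : ℕ}, j + e ≤ D → ∃ v, G.dist x v = j + e ∧ G.dist y v = e
  | 0, _ => ⟨y, hxy, SimpleGraph.dist_self⟩
  | e + 1, he => by
    obtain ⟨v, hxv, hyv⟩ := hG.exists_dist_eq_add hxy (e := e) (by omega)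
    obtain ⟨w, hw⟩ :=
      card_pos.1 ((hG.2.2.2.2.2 (j + e) (by omega) x v hxv).2 ▸ hG.b_pos (by omega))
    rw [mem_filter] at hw
    have h₁ : G.dist y w ≤ G.dist y v + G.dist v w := hG.1.dist_triangle
    have h₂ : G.dist x w ≤ G.dist x y + G.dist y w := hG.1.dist_triangle
    rw [SimpleGraph.dist_eq_one_iff_adj.2 hw.2.1] at h₁
    exact ⟨w, by omega, by omega⟩

theorem card_filter_dist_eq_sub_one (hG : IsDRG G D b c) {x y : V} {i : ℕ}
    (hxy : G.dist x y = i) : #{z ∈ G.neighborFinset y | G.dist x z = i - 1} = c i := by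
  rw [SimpleGraph.neighborFinset_eq_filter, filter_filter]
  exact (hG.2.2.2.2.2 i (hxy ▸ hG.2.1 x y) x y hxy).1

theorem card_filter_dist_eq_add_one (hG : IsDRG G D b c) {x y : V} {i : ℕ}
    (hxy : G.dist x y = i) : #{z ∈ G.neighborFinset y | G.dist x z = i + 1} = b i := by
  rw [SimpleGraph.neighborFinset_eq_filter, filter_filter]
  exact (hG.2.2.2.2.2 i (hxy ▸ hG.2.1 x y) x y hxy).2

theorem sum_neighborFinset_eq_of_card (hG : IsDRG G D b c) {x y : V} {i : ℕ} (hi : 1 ≤ i)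
    (hxy : G.dist x y = i) (g : ℕ → ℝ) :
    ∑ z ∈ G.neighborFinset y, g (G.dist x z) =
      c i * g (i - 1) + #{z ∈ G.neighborFinset y | G.dist x z = i} * g i + b i * g (i + 1) := by
  have hmaps : ∀ z ∈ G.neighborFinset y, G.dist x z ∈ ({i - 1, i, i + 1} : Finset ℕ) := by
    intro z hz
    have := ((G.mem_neighborFinset y z).1 hz).diff_dist_adj (u := x)
    simp only [mem_insert, mem_singleton]
    omega
  rw [← sum_fiberwise_of_maps_to' hmaps, sum_insert (by simp; omega), sum_insert (by simp),
    sum_singleton]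
  simp only [sum_const, nsmul_eq_mul, hG.card_filter_dist_eq_sub_one hxy,
    hG.card_filter_dist_eq_add_one hxy, add_assoc]

theorem c_add_card_add_b (hG : IsDRG G D b c) {x y : V} {i : ℕ} (hi : 1 ≤ i)
    (hxy : G.dist x y = i) : c i + #{z ∈ G.neighborFinset y | G.dist x z = i} + b i = b 0 := by
  have h := hG.sum_neighborFinset_eq_of_card hi hxy fun _ => 1
  simp only [sum_const, nsmul_eq_mul, mul_one, SimpleGraph.card_neighborFinset_eq_degree,
    hG.degree_eq] at h
  exact_mod_cast h.symm

theorem card_filter_dist_eq_self (hG : IsDRG G D b c) {x y : V} {i : ℕ} (hi : 1 ≤ i)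
    (hxy : G.dist x y = i) : #{z ∈ G.neighborFinset y | G.dist x z = i} = drgA b c i := by
  have := hG.c_add_card_add_b hi hxy
  unfold drgA
  omega

theorem c_add_drgA_add_b (hG : IsDRG G D b c) {i : ℕ} (hi : 1 ≤ i) (hiD : i ≤ D) :
    c i + drgA b c i + b i = b 0 := by
  obtain ⟨x, y, hxy⟩ := hG.exists_dist_eq hiD
  rw [← hG.card_filter_dist_eq_self hi hxy]
  exact hG.c_add_card_add_b hi hxy

theorem sum_neighborFinset_eq (hG : IsDRG G D b c) {x y : V} {i : ℕ} (hi : 1 ≤ i)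
    (hxy : G.dist x y = i) (g : ℕ → ℝ) :
    ∑ z ∈ G.neighborFinset y, g (G.dist x z) =
      c i * g (i - 1) + drgA b c i * g i + b i * g (i + 1) := by
  rw [hG.sum_neighborFinset_eq_of_card hi hxy, hG.card_filter_dist_eq_self hi hxy]

theorem stdSeq_one (hG : IsDRG G D b c) (hD : 1 ≤ D) (hu : IsStdSeq D b c (b 0 * σ) u) :
    u 1 = σ := by
  have hk : (b 0 : ℝ) ≠ 0 := by exact_mod_cast (hG.b_pos hD).ne'
  rw [hu.2.1]
  field_simp

theorem stdSeq_eq_pow_of_drgA_eq (hG : IsDRG G D b c) (hσ : (drgA b c 1 + 1) * σ = -1)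
    (hu : IsStdSeq D b c (b 0 * σ) u) {n : ℕ} (hnD : n ≤ D)
    (ha : ∀ i, 1 ≤ i → i < n → drgA b c i = c i * drgA b c 1) : ∀ m ≤ n, u m = σ ^ m := by
  intro m hm
  induction m using Nat.strong_induction_on with
  | _ m ih =>
    match m with
    | 0 => simpa using hu.1
    | 1 => simpa using hG.stdSeq_one (by omega) hu
    | m + 2 =>
      have hrec : c (m + 1) * u m + drgA b c (m + 1) * u (m + 1) + b (m + 1) * u (m + 2) =
          b 0 * σ * u (m + 1) := hu.2.2 (m + 1) (by omega) (by omega)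
      rw [ih m (by omega) (by omega), ih (m + 1) (by omega) (by omega)] at hrec
      have hk : (c (m + 1) : ℝ) + drgA b c (m + 1) + b (m + 1) = b 0 := by
        exact_mod_cast hG.c_add_drgA_add_b (by omega) (by omega)
      have ha' : (drgA b c (m + 1) : ℝ) = c (m + 1) * drgA b c 1 := by
        exact_mod_cast ha (m + 1) (by omega) (by omega)
      have hpow := (pow_recurrence_iff (Nat.cast_nonneg _) hσ hk m).2 ha'
      have hb : (b (m + 1) : ℝ) ≠ 0 := by exact_mod_cast (hG.b_pos (by omega)).ne'
      apply mul_left_cancel₀ hb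
      linear_combination hrec - hpow

section Representation

variable {E : Type*} [NormedAddCommGroup E] [InnerProductSpace ℝ E] {φ : V → E} {θ : ℝ}

theorem sum_neighborFinset_eq_smul (hG : IsDRG G D b c) (hD : 2 ≤ D) (hu : IsStdSeq D b c θ u)
    (hφ : ∀ x y, ⟪φ x, φ y⟫_ℝ = u (G.dist x y)) (y : V) :
    ∑ z ∈ G.neighborFinset y, φ z = θ • φ y := by
  have hk : (b 0 : ℝ) ≠ 0 := by exact_mod_cast (hG.b_pos (by omega)).ne'
  have hku : (b 0 : ℝ) * u 1 = θ := by rw [hu.2.1]; field_simp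
  have hSy : ⟪∑ z ∈ G.neighborFinset y, φ z, φ y⟫_ℝ = θ := by
    rw [inner_sum_eq_card_mul (e := 1) hφ fun z hz => by simpa [SimpleGraph.dist_comm] using hz,
      SimpleGraph.card_neighborFinset_eq_degree, hG.degree_eq, hku]
  have hSw : ∀ w ∈ G.neighborFinset y, ⟪∑ z ∈ G.neighborFinset y, φ z, φ w⟫_ℝ = θ * u 1 := by
    intro w hw
    have hwy : G.dist w y = 1 := by simpa [SimpleGraph.dist_comm] using hw
    simp_rw [sum_inner, real_inner_comm (φ w), hφ w, hG.sum_neighborFinset_eq le_rfl hwy,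
      ← hu.2.2 1 le_rfl (by omega)]
  apply eq_smul_of_inner_self_eq_mul_inner
  · rw [inner_sum, sum_congr rfl hSw, sum_const, nsmul_eq_mul,
      SimpleGraph.card_neighborFinset_eq_degree, hG.degree_eq, hSy, ← hku]
    ring
  · rw [hSy, hφ, SimpleGraph.dist_self, hu.1, mul_one]

theorem stdSeq_recurrence (hG : IsDRG G D b c) (hD : 2 ≤ D) (hu : IsStdSeq D b c θ u)
    (hφ : ∀ x y, ⟪φ x, φ y⟫_ℝ = u (G.dist x y)) {i : ℕ} (hi : 1 ≤ i) (hiD : i ≤ D) :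
    c i * u (i - 1) + drgA b c i * u i + b i * u (i + 1) = θ * u i := by
  obtain ⟨x, y, hxy⟩ := hG.exists_dist_eq hiD
  have h := congrArg (⟪φ x, ·⟫_ℝ) (hG.sum_neighborFinset_eq_smul hD hu hφ y)
  simp only [inner_sum, real_inner_smul_right, hφ, hxy] at h
  rwa [hG.sum_neighborFinset_eq hi hxy] at h

theorem drgA_eq_mul_of_stdSeq_eq_pow (hG : IsDRG G D b c) (hD : 2 ≤ D)
    (hσ : (drgA b c 1 + 1) * σ = -1) (hu : IsStdSeq D b c (b 0 * σ) u)
    (hφ : ∀ x y, ⟪φ x, φ y⟫_ℝ = u (G.dist x y)) (hpow : ∀ m ≤ D, u m = σ ^ m) {i : ℕ}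
    (hi : 1 ≤ i) (hiD : i ≤ D) : drgA b c i = c i * drgA b c 1 := by
  obtain ⟨n, rfl⟩ : ∃ n, i = n + 1 := ⟨i - 1, by omega⟩
  have hrec := hG.stdSeq_recurrence hD hu hφ hi hiD
  -- at `i = D` the unknown value `u (D + 1)` is multiplied by `b D = 0`
  have hb : (b (n + 1) : ℝ) * u (n + 1 + 1) = b (n + 1) * σ ^ (n + 2) := by
    rcases (show n + 1 < D ∨ n + 1 = D by omega) with h | h
    · rw [hpow (n + 1 + 1) h]
    · simp [h, hG.2.2.2.1]
  rw [Nat.add_sub_cancel, hpow n (by omega), hpow (n + 1) hiD] at hrec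
  have hk : (c (n + 1) : ℝ) + drgA b c (n + 1) + b (n + 1) = b 0 := by
    exact_mod_cast hG.c_add_drgA_add_b hi hiD
  exact_mod_cast (pow_recurrence_iff (Nat.cast_nonneg _) hσ hk n).1
    (by linear_combination hrec - hb)

end Representation

section Cvec

variable {N : ℕ} {φ : V → EuclideanSpace ℝ (Fin N)}

theorem inner_Cvec_eq (hG : IsDRG G D b c) (hφ : ∀ x y, ⟪φ x, φ y⟫_ℝ = u (G.dist x y))
    {j e : ℕ} (hj : 1 ≤ j) {x y v : V} (hxy : G.dist x y = j) (hxv : G.dist x v = j + e)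
    (hyv : G.dist y v = e) :
    ⟪Cvec G φ j x y, φ v⟫_ℝ = c j * (u (j + e - 1) - u (e + 1)) := by
  have hZ : ∀ z ∈ univ.filter (fun z => G.Adj x z ∧ G.dist y z = j - 1),
      G.dist z v = j + e - 1 := by
    intro z hz
    obtain ⟨hxz, hyz⟩ := (mem_filter.1 hz).2
    have h₁ : G.dist z v ≤ G.dist z y + G.dist y v := hG.1.dist_triangle
    have h₂ : G.dist x v ≤ G.dist x z + G.dist z v := hG.1.dist_triangle
    rw [SimpleGraph.dist_comm (u := z) (v := y), hyz] at h₁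
    rw [SimpleGraph.dist_eq_one_iff_adj.2 hxz] at h₂
    omega
  have hW : ∀ w ∈ univ.filter (fun w => G.dist x w = j - 1 ∧ G.Adj y w),
      G.dist w v = e + 1 := by
    intro w hw
    obtain ⟨hxw, hyw⟩ := (mem_filter.1 hw).2
    have h₁ : G.dist w v ≤ G.dist w y + G.dist y v := hG.1.dist_triangle
    have h₂ : G.dist x v ≤ G.dist x w + G.dist w v := hG.1.dist_triangle
    rw [SimpleGraph.dist_comm (u := w) (v := y), SimpleGraph.dist_eq_one_iff_adj.2 hyw] at h₁
    omega
  have hyx : G.dist y x = j := by rw [SimpleGraph.dist_comm, hxy]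
  have hjD : j ≤ D := hxy ▸ hG.2.1 x y
  rw [Cvec, inner_sub_left, inner_sum_eq_card_mul hφ hZ, inner_sum_eq_card_mul hφ hW,
    (hG.2.2.2.2.2 j hjD y x hyx).1]
  simp only [and_comm (a := G.dist x _ = j - 1), (hG.2.2.2.2.2 j hjD x y hxy).1]
  ring

/-- Equality in Cauchy–Schwarz makes `C_j` a multiple of `φ x - φ y`; pairing both with `φ v`
for `v` beyond `y` yields a relation between the values of `u`. -/
theorem one_sub_mul_sub_eq_of_Cvec_parallel (hG : IsDRG G D b c)
    (hφ : ∀ x y, ⟪φ x, φ y⟫_ℝ = u (G.dist x y)) (hu0 : u 0 = 1) {j e : ℕ} (hj : 1 ≤ j)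
    (huj : u j ≠ 1) {x y v : V} (hxy : G.dist x y = j)
    (hS : ⟪Cvec G φ j x y, Cvec G φ j x y⟫_ℝ * ⟪φ x - φ y, φ x - φ y⟫_ℝ =
      ⟪Cvec G φ j x y, φ x - φ y⟫_ℝ ^ 2)
    (hxv : G.dist x v = j + e) (hyv : G.dist y v = e) :
    (1 - u j) * (u (j + e - 1) - u (e + 1)) = (u 1 - u (j - 1)) * (u (j + e) - u e) := by
  have hyx : G.dist y x = j := by rw [SimpleGraph.dist_comm, hxy]
  have hCx : ⟪Cvec G φ j x y, φ x⟫_ℝ = c j * (u 1 - u (j - 1)) := by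
    rw [← neg_neg (Cvec G φ j x y), ← Cvec_swap, inner_neg_left,
      hG.inner_Cvec_eq hφ hj hyx (e := 0) hyx SimpleGraph.dist_self, add_zero, zero_add]
    ring
  have hCy : ⟪Cvec G φ j x y, φ y⟫_ℝ = c j * (u (j - 1) - u 1) :=
    hG.inner_Cvec_eq hφ hj hxy (e := 0) hxy SimpleGraph.dist_self
  have hFF : ⟪φ x - φ y, φ x - φ y⟫_ℝ = 2 * (1 - u j) := by
    simp only [inner_sub_left, inner_sub_right, hφ, SimpleGraph.dist_self, hxy, hyx, hu0]
    ring
  have hCF : ⟪Cvec G φ j x y, φ x - φ y⟫_ℝ = 2 * c j * (u 1 - u (j - 1)) := by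
    rw [inner_sub_right, hCx, hCy]
    ring
  have hFF0 : 1 - u j ≠ 0 := sub_ne_zero.2 huj.symm
  have hv := congrArg (⟪·, φ v⟫_ℝ)
    (eq_smul_of_inner_mul_inner_self_eq_sq (hFF ▸ by positivity) hS)
  simp only [real_inner_smul_left, inner_sub_left, hφ, hxv, hyv, hCF, hFF,
    hG.inner_Cvec_eq hφ hj hxy hxv hyv] at hv
  have hc : (c j : ℝ) ≠ 0 := by exact_mod_cast (hG.c_pos hj (hxy ▸ hG.2.1 x y)).ne'
  field_simp at hv
  linear_combination hv

theorem stdSeq_eq_pow_of_Cvec_parallel (hG : IsDRG G D b c)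
    (hφ : ∀ x y, ⟪φ x, φ y⟫_ℝ = u (G.dist x y)) {j : ℕ} (hj : 2 ≤ j) (hσj : σ ^ j ≠ 1)
    (hσ : σ - σ ^ (j - 1) ≠ 0) (hlow : ∀ m ≤ j, u m = σ ^ m) {x y : V} (hxy : G.dist x y = j)
    (hS : ⟪Cvec G φ j x y, Cvec G φ j x y⟫_ℝ * ⟪φ x - φ y, φ x - φ y⟫_ℝ =
      ⟪Cvec G φ j x y, φ x - φ y⟫_ℝ ^ 2) :
    ∀ m ≤ D, u m = σ ^ m := by
  intro m hm
  induction m using Nat.strong_induction_on with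
  | _ m ih =>
    rcases le_or_gt m j with hmj | hjm
    · exact hlow m hmj
    obtain ⟨e, rfl⟩ : ∃ e, m = j + e := ⟨m - j, by omega⟩
    obtain ⟨v, hxv, hyv⟩ := hG.exists_dist_eq_add hxy hm
    have h := hG.one_sub_mul_sub_eq_of_Cvec_parallel hφ (by simpa using hlow 0 (by omega))
      (by omega) (by rwa [hlow j le_rfl]) hxy hS hxv hyv
    rw [hlow j le_rfl, hlow 1 (by omega), hlow (j - 1) (by omega), pow_one,
      ih (j + e - 1) (by omega) (by omega), ih (e + 1) (by omega) (by omega),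
      ih e (by omega) (by omega)] at h
    exact eq_pow_add_of_mul_sub_eq (by omega) hσ h

end Cvec

end IsDRG

theorem stmt_12_general {V : Type*} [Fintype V] (G : SimpleGraph V) [DecidableRel G.Adj]
    (D : ℕ) (b c : ℕ → ℕ) (hDRG : IsDRG G D b c)
    (hnb : NonBipartite G)
    (θmin : ℝ)
    (hθval : θmin = -(b 0 : ℝ) / ((drgA b c 1 : ℝ) + 1))
    (u : ℕ → ℝ) (hu : IsStdSeq D b c θmin u)
    (N : ℕ) (φ : V → EuclideanSpace ℝ (Fin N))
    (hφ : ∀ x y : V, (inner ℝ (φ x) (φ y) : ℝ) = u (G.dist x y))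
    (j : ℕ) (hj3 : 3 ≤ j) (hjD : j ≤ D - 1)
    (ha : ∀ i, 1 ≤ i → i ≤ j - 1 → drgA b c i = c i * drgA b c 1)
    (hS : ∀ x y : V, G.dist x y = j →
      (inner ℝ (Cvec G φ j x y) (Cvec G φ j x y) : ℝ) *
          (inner ℝ (φ x - φ y) (φ x - φ y) : ℝ) =
        (inner ℝ (Cvec G φ j x y) (φ x - φ y) : ℝ) ^ 2) :
    ∀ i, 1 ≤ i → i ≤ D → drgA b c i = c i * drgA b c 1 := by
  set σ : ℝ := -1 / (drgA b c 1 + 1) with hσdef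
  have hσ : (drgA b c 1 + 1 : ℝ) * σ = -1 := by rw [hσdef]; field_simp
  rw [hθval, show -(b 0 : ℝ) / (drgA b c 1 + 1) = b 0 * σ by rw [hσdef]; ring] at hu
  have hu1 : u 1 = σ := hDRG.stdSeq_one (by omega) hu
  have ha1 : 1 ≤ (drgA b c 1 : ℝ) := by
    refine Nat.one_le_cast.2 (Nat.one_le_iff_ne_zero.2 fun h0 => hnb ?_)
    exact hDRG.1.colorable_two_of_inner_eq_neg_one hφ hu.1 (by simp [hu1, hσdef, h0])
  have hσ1 := abs_lt_one_of_mul_eq_neg_one ha1 hσ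
  have hσ0 : σ ≠ 0 := by rintro h; simp [h] at hσ
  have hlow := hDRG.stdSeq_eq_pow_of_drgA_eq hσ hu (n := j) (by omega)
    fun i hi hij => ha i hi (by omega)
  obtain ⟨x, y, hxy⟩ := hDRG.exists_dist_eq (i := j) (by omega)
  intro i hi hiD
  exact hDRG.drgA_eq_mul_of_stdSeq_eq_pow (by omega) hσ hu hφ
    (hDRG.stdSeq_eq_pow_of_Cvec_parallel hφ (by omega) (pow_ne_one_of_abs_lt_one hσ1 (by omega))
      (sub_pow_ne_zero_of_abs_lt_one hσ1 hσ0 (by omega)) hlow hxy (hS x y hxy)) hi hiD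

/-- For a non-bipartite geometric distance-regular graph with diameter `D ≥ 4`,
smallest eigenvalue `θmin = -k/(a₁+1)` with standard sequence `u` and representation `φ`
with `⟨φ x, φ y⟩ = u (d(x,y))`: if for some `3 ≤ j ≤ D - 1` one has `a_i = c_i * a₁` for
all `1 ≤ i ≤ j - 1` (equivalently `γ_{j-1} = 1`) and all pairs `x, y` at distance `j`
satisfy `⟨C_j, C_j⟩ ⟨F_j, F_j⟩ = ⟨C_j, F_j⟩²`, then `a_i = c_i * a₁` for all `1 ≤ i ≤ D`,
i.e. `G` is a regular near `2D`-gon. -/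
theorem stmt_12 {V : Type*} [Fintype V] (G : SimpleGraph V) [DecidableRel G.Adj]
    (D : ℕ) (b c : ℕ → ℕ) (hDRG : IsDRG G D b c) (hD : 4 ≤ D)
    (hnb : NonBipartite G)
    (θmin : ℝ) (hθ : IsSmallestAdjEigenvalue G θmin)
    (hθval : θmin = -(b 0 : ℝ) / ((drgA b c 1 : ℝ) + 1))
    (𝒞 : Set (Finset V)) (hgeo : IsGeometricWith G (b 0) θmin 𝒞)
    (u : ℕ → ℝ) (hu : IsStdSeq D b c θmin u)
    (N : ℕ) (φ : V → EuclideanSpace ℝ (Fin N))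
    (hφ : ∀ x y : V, (inner ℝ (φ x) (φ y) : ℝ) = u (G.dist x y))
    (j : ℕ) (hj3 : 3 ≤ j) (hjD : j ≤ D - 1)
    (ha : ∀ i, 1 ≤ i → i ≤ j - 1 → drgA b c i = c i * drgA b c 1)
    (hS : ∀ x y : V, G.dist x y = j →
      (inner ℝ (Cvec G φ j x y) (Cvec G φ j x y) : ℝ) *
          (inner ℝ (φ x - φ y) (φ x - φ y) : ℝ) =
        (inner ℝ (Cvec G φ j x y) (φ x - φ y) : ℝ) ^ 2) :
    ∀ i, 1 ≤ i → i ≤ D → drgA b c i = c i * drgA b c 1 :=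
  stmt_12_general G D b c hDRG hnb θmin hθval u hu N φ hφ j hj3 hjD ha hS
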